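/- Let I-script be a countable relational L2-structure linearly ordered by <, with underlying order I, and for each i in I let M_i be a countable relational L1-structure linearly ordered by <, where L1 ∩ L2 = {<} and all M_i have the same age K. If age(I-script) and K both have the hereditary property, the joint embedding property, and the amalgamation property, then the age of the semi-direct product structure I-script_{i in I}(M_i) also has these three properties. -/
import Mathlib


open FirstOrder FirstOrder.Language FirstOrder.Language.Structure CategoryTheory

namespace SRPaper

/-- Two tuples from `M` have the same complete quantifier-free type:
they satisfy the same quantifier-free formulas. -/
def SameQfTp (L : Language) (M : Type*) [L.Structure M] {n : ℕ} (a b : Fin n → M) : Prop :=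
  ∀ φ : L.Formula (Fin n), φ.IsQF → (φ.Realize a ↔ φ.Realize b)

/-- A map is quantifier-free-type-preserving if tuples with the same complete
quantifier-free type are sent to tuples with the same complete quantifier-free type. -/
def QfTpPreserving (LA : Language) (A : Type*) [LA.Structure A]
    (LB : Language) (B : Type*) [LB.Structure B] (h : A → B) : Prop :=
  ∀ (n : ℕ) (a b : Fin n → A), SameQfTp LA A a b → SameQfTp LB B (h ∘ a) (h ∘ b)

/-- `g : A → B` and `f : B → A` witness that `A` is a semi-retraction of `B`. -/
def SemiRetractionWitness (LA : Language) (A : Type*) [LA.Structure A]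
    (LB : Language) (B : Type*) [LB.Structure B] (g : A → B) (f : B → A) : Prop :=
  Function.Injective g ∧ Function.Injective f ∧
    QfTpPreserving LA A LB B g ∧ QfTpPreserving LB B LA A f ∧
    ∀ (n : ℕ) (φ : LA.Formula (Fin n)), φ.IsQF →
      ∀ s : Fin n → A, φ.Realize s → φ.Realize (f ∘ g ∘ s)

/-- `A` is a semi-retraction of `B`. -/
def IsSemiRetractionOf (LA : Language) (A : Type*) [LA.Structure A]
    (LB : Language) (B : Type*) [LB.Structure B] : Prop :=
  ∃ (g : A → B) (f : B → A), SemiRetractionWitness LA A LB B g f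

/-- The Ramsey property for a class of structures `K`: for all `A B ∈ K` and `k ≥ 1` there is
`C ∈ K` such that every `k`-coloring of substructures of `C` admits a copy `B'` of `B` in `C`
on which the color of copies of `A` is constant. -/
def RamseyClass (L : Language) (K : Set (Bundled L.Structure)) : Prop :=
  ∀ A B : Bundled L.Structure, A ∈ K → B ∈ K → ∀ k : ℕ, 1 ≤ k →
    ∃ C : Bundled L.Structure, C ∈ K ∧
      ∀ c : L.Substructure C → Fin k,
        ∃ B' : L.Substructure C, Nonempty (B ≃[L] B') ∧
          ∀ A₁ A₂ : L.Substructure C, A₁ ≤ B' → A₂ ≤ B' →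
            Nonempty (A ≃[L] A₁) → Nonempty (A ≃[L] A₂) → c A₁ = c A₂

/-- A countable structure has the Ramsey property if its age does. -/
def HasRP (L : Language) (M : Type*) [L.Structure M] : Prop :=
  RamseyClass L (L.age M)

/-- `(a i : i ∈ I)` is an `I`-indexed indiscernible set of `d`-tuples in `U`. -/
def IndexedIndiscernible (L' : Language) (I : Type*) [L'.Structure I]
    (L : Language) (U : Type*) [L.Structure U] (d : ℕ) (a : I → Fin d → U) : Prop :=
  ∀ (n : ℕ) (ι κ : Fin n → I), SameQfTp L' I ι κ →
    ∀ φ : L.Formula (Fin n × Fin d),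
      (φ.Realize fun p => a (ι p.1) p.2) ↔ (φ.Realize fun p => a (κ p.1) p.2)

/-- `Y` realizes the EM-type of `X`: any formula satisfied by all `X`-tuples whose index tuple
has a given complete quantifier-free type in `I` is satisfied by the corresponding `Y`-tuple. -/
def LocallyBased (L' : Language) (I : Type*) [L'.Structure I]
    (L : Language) (U : Type*) [L.Structure U] (d : ℕ) (X Y : I → Fin d → U) : Prop :=
  ∀ (n : ℕ) (φ : L.Formula (Fin n × Fin d)) (ι : Fin n → I),
    (∀ κ : Fin n → I, SameQfTp L' I ι κ → φ.Realize fun p => X (κ p.1) p.2) →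
    (φ.Realize fun p => Y (ι p.1) p.2)

/-- `U` realizes every finitely-satisfiable set of formulas in one free variable with
countably many parameters: "sufficient saturation" for countable index structures. -/
def AlephOneSaturated (L : Language) (U : Type*) [L.Structure U] : Prop :=
  ∀ (p : ℕ → U) (Φ : Set (L.Formula (ℕ ⊕ Fin 1))),
    (∀ Φ₀ : Finset (L.Formula (ℕ ⊕ Fin 1)), ↑Φ₀ ⊆ Φ →
      ∃ x : U, ∀ φ ∈ Φ₀, Formula.Realize φ (Sum.elim p fun _ => x)) →
    ∃ x : U, ∀ φ ∈ Φ, Formula.Realize φ (Sum.elim p fun _ => x)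

/-- `I`-indexed indiscernible sets have the modeling property: in any sufficiently saturated
structure `U`, any `I`-indexed set of same-length tuples admits an `I`-indexed indiscernible
set in `U` locally based on it. -/
def ModelingProperty (L' : Language) (I : Type*) [L'.Structure I] : Prop :=
  ∀ (L : FirstOrder.Language.{0, 0}) (U : Type) [L.Structure U], AlephOneSaturated L U →
    ∀ (d : ℕ) (X : I → Fin d → U),
      ∃ Y : I → Fin d → U,
        IndexedIndiscernible L' I L U d Y ∧ LocallyBased L' I L U d X Y

end SRPaper

namespace SRPaper

/-! ### Disjoint unions and semi-direct product structures

An "ordered `L`-structure" is modelled as a type with an `L.Structure` instance (for the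
relations other than `<`) together with a `LinearOrder` instance (interpreting `<`); its full
language is `L.sum Language.order`. -/

attribute [local instance] FirstOrder.Language.orderStructure

/-- Relation symbols `E`: a single binary symbol. -/
inductive EqSymb : ℕ → Type
  | E : EqSymb 2

/-- The language `{E}` with one binary relation. -/
def langE : Language := ⟨fun _ => Empty, EqSymb⟩

/-- Unary predicate symbols `P i` for `i : O`. -/
inductive PredSymb (O : Type) : ℕ → Type
  | P (i : O) : PredSymb O 1

/-- The language `{P_i : i ∈ O}` of unary predicates. -/
def langP (O : Type) : Language := ⟨fun _ => Empty, PredSymb O⟩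

/-- A single binary relation symbol (for graphs). -/
inductive GrSymb : ℕ → Type
  | adj : GrSymb 2

/-- The language of graphs: one binary relation. -/
def langGr : Language := ⟨fun _ => Empty, GrSymb⟩

instance : langGr.IsRelational := fun _ => inferInstanceAs (IsEmpty Empty)

section Constructions

variable (O : Type) [LinearOrder O]

/-- Interpretation of a relational language `L1` on the disjoint union `Σₗ i, M i`,
where each relation is computed fiberwise (and fails on tuples meeting several fibers). -/
def fiberStructure (L1 : Language) [L1.IsRelational] (M : O → Type)
    [∀ i, L1.Structure (M i)] : L1.Structure (Σₗ i, M i) where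
  funMap := fun f _ => isEmptyElim f
  RelMap := fun {n} r v =>
    ∃ (i : O) (w : Fin n → M i), (∀ k, v k = toLex ⟨i, w k⟩) ∧ Structure.RelMap r w

/-- Interpretation of a relational language `L2` on the disjoint union `Σₗ i, M i` via the
projection to the index structure `O`. -/
def projStructure (L2 : Language) [L2.IsRelational] [L2.Structure O] (M : O → Type) :
    L2.Structure (Σₗ i, M i) where
  funMap := fun f _ => isEmptyElim f
  RelMap := fun {n} r v => Structure.RelMap r fun k => (ofLex (v k)).1

/-- Interpretation of `E` on `Σₗ i, M i`: the equivalence relation whose classes are the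
fibers `M i`. -/
def eqClassStructure (M : O → Type) : langE.Structure (Σₗ i, M i) where
  funMap := fun f _ => Empty.elim f
  RelMap := fun {n} r v =>
    match n, r, v with
    | _, EqSymb.E, v => (ofLex (v 0)).1 = (ofLex (v 1)).1

/-- Interpretation of the predicates `P i` on `Σₗ i, M i`: `P i` names the fiber `M i`. -/
def predStructure (M : O → Type) : (langP O).Structure (Σₗ i, M i) where
  funMap := fun f _ => Empty.elim f
  RelMap := fun {n} r v =>
    match n, r, v with
    | _, PredSymb.P i, v => (ofLex (v 0)).1 = i

/-- The language of `U_{i ∈ O}(M_i)`: the (common) language of the `M_i`, the order `<`,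
and the unary predicates `P_i`. -/
def langU (L1 : Language) (O : Type) : Language := (L1.sum Language.order).sum (langP O)

/-- The structure `U_{i ∈ O}(M_i)` on the disjoint union `Σₗ i, M i`: relations of `L1` are
computed fiberwise, `<` is the lexicographic order (fibers are convex, ordered by `O`), and
`P i` names the fiber `M i`. -/
instance uStructure (L1 : Language) [L1.IsRelational] (M : O → Type)
    [∀ i, L1.Structure (M i)] [∀ i, LinearOrder (M i)] :
    (langU L1 O).Structure (Σₗ i, M i) :=
  letI := fiberStructure O L1 M
  letI := predStructure O M
  inferInstanceAs (((L1.sum Language.order).sum (langP O)).Structure (Σₗ i, M i))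

/-- The language `L1 ∪ {<} ∪ {E}` (the reduct language of a semi-direct product, and the
language of `O(M_i | i ∈ I)` when the index structure is a pure linear order). -/
def langRed (L1 : Language) : Language := (L1.sum Language.order).sum langE

/-- The `L1 ∪ {<} ∪ {E}`-structure on `Σₗ i, M i`: relations of `L1` fiberwise, `<` the
lexicographic order, `E` the equivalence relation whose classes are the fibers.  For a pure
linear order index this is the structure `O(M_i | i ∈ O)`. -/
instance redStructure (L1 : Language) [L1.IsRelational] (M : O → Type)
    [∀ i, L1.Structure (M i)] [∀ i, LinearOrder (M i)] :
    (langRed L1).Structure (Σₗ i, M i) :=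
  letI := fiberStructure O L1 M
  letI := eqClassStructure O M
  inferInstanceAs (((L1.sum Language.order).sum langE).Structure (Σₗ i, M i))

/-- The language `L2 ∪ L1 ∪ {E}` (with the shared order `<`) of a semi-direct product
structure. -/
def langSD (L1 L2 : Language) : Language := (langRed L1).sum L2

/-- The semi-direct product structure `𝕀 = I-script_{i ∈ I}(M_i)` on `Σₗ i, M i`:
relations of `L1` fiberwise, `<` the lexicographic order, `E` the fiber equivalence
relation, and relations of `L2` computed from the index structure via the projection. -/
instance sdStructure (L2 : Language) [L2.IsRelational] [L2.Structure O]
    (L1 : Language) [L1.IsRelational] (M : O → Type)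
    [∀ i, L1.Structure (M i)] [∀ i, LinearOrder (M i)] :
    (langSD L1 L2).Structure (Σₗ i, M i) :=
  letI := projStructure O L2 M
  inferInstanceAs (((langRed L1).sum L2).Structure (Σₗ i, M i))

end Constructions

/-- The underlying set of the "underlying graph" `gr(ā)` of a tuple from a semi-direct
product structure: the set of indices whose fiber meets the tuple. -/
def grSet {O : Type} {M : O → Type} {n : ℕ} (a : Fin n → (Σₗ i, M i)) : Set O :=
  {t | ∃ k, (ofLex (a k)).1 = t}

/-- The full language of ordered graphs: one binary relation and the order. -/
def langOG : Language := langGr.sum Language.order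

/-- A finite or countable `langOG`-structure is an ordered graph when the binary relation is
irreflexive and symmetric and the order symbol is interpreted as a linear order. -/
def IsOrderedGraph (N : Type*) [langOG.Structure N] : Prop :=
  (∀ x : N, ¬ Structure.RelMap (L := langOG) (Sum.inl GrSymb.adj) ![x, x]) ∧
  (∀ x y : N, Structure.RelMap (L := langOG) (Sum.inl GrSymb.adj) ![x, y] →
    Structure.RelMap (L := langOG) (Sum.inl GrSymb.adj) ![y, x]) ∧
  IsLinearOrder N (fun a b =>
    Structure.RelMap (L := langOG) (Sum.inr Language.orderRel.le) ![a, b])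

/-- A random ordered graph: a countable structure that is a Fraïssé limit of the class of
finite ordered graphs. -/
def IsRandomOrderedGraph (G : Type) [langGr.Structure G] [LinearOrder G] [Countable G] : Prop :=
  letI : langOG.Structure G := inferInstanceAs ((langGr.sum Language.order).Structure G)
  haveI : ∀ l, IsEmpty (langOG.Functions l) := fun _ => inferInstanceAs (IsEmpty (Empty ⊕ Empty))
  IsFraisseLimit {N : CategoryTheory.Bundled langOG.Structure | Finite N ∧ IsOrderedGraph N} G

end SRPaper

attribute [local instance] FirstOrder.Language.orderStructure
namespace SRPaper

instance : langE.IsRelational := fun _ => inferInstanceAs (IsEmpty Empty)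

instance (L1 : Language) [L1.IsRelational] : (langRed L1).IsRelational :=
  inferInstanceAs ((L1.sum Language.order).sum langE).IsRelational

instance (L1 L2 : Language) [L1.IsRelational] [L2.IsRelational] : (langSD L1 L2).IsRelational :=
  inferInstanceAs ((langRed L1).sum L2).IsRelational

section AuxAP

variable {I : Type} [LinearOrder I] {L2 : Language} [L2.IsRelational] [L2.Structure I]
  {L1 : Language} [L1.IsRelational] {M : I → Type} [∀ i, L1.Structure (M i)]
  [∀ i, LinearOrder (M i)]

theorem sr_relMap_L1 {n} (r : L1.Relations n) (v : Fin n → Σₗ i, M i) :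
    RelMap (L := langSD L1 L2) (Sum.inl (Sum.inl (Sum.inl r))) v ↔
      ∃ (i : I) (w : Fin n → M i), (∀ k, v k = toLex ⟨i, w k⟩) ∧ RelMap r w := Iff.rfl

theorem sr_relMap_leSD (v : Fin 2 → Σₗ i, M i) :
    RelMap (L := langSD L1 L2) (Sum.inl (Sum.inl (Sum.inr Language.orderRel.le))) v ↔
      v 0 ≤ v 1 := Iff.rfl

theorem sr_relMap_E (v : Fin 2 → Σₗ i, M i) :
    RelMap (L := langSD L1 L2) (Sum.inl (Sum.inr EqSymb.E)) v ↔
      (ofLex (v 0)).1 = (ofLex (v 1)).1 := Iff.rfl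

theorem sr_relMap_L2 {n} (r : L2.Relations n) (v : Fin n → Σₗ i, M i) :
    RelMap (L := langSD L1 L2) (Sum.inr r) v ↔
      RelMap r (fun k => (ofLex (v k)).1) := Iff.rfl

theorem sr_relMapI_L2 {n} (r : L2.Relations n) (v : Fin n → I) :
    RelMap (L := L2.sum Language.order) (Sum.inl r) v ↔ RelMap r v := Iff.rfl

theorem sr_relMapI_le (v : Fin 2 → I) :
    RelMap (L := L2.sum Language.order) (Sum.inr Language.orderRel.le) v ↔ v 0 ≤ v 1 := Iff.rfl

theorem sr_relMapF_le {i : I} (v : Fin 2 → M i) :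
    RelMap (L := L1.sum Language.order) (Sum.inr Language.orderRel.le) v ↔ v 0 ≤ v 1 := Iff.rfl

theorem sr_relMapF_L1 {i : I} {n} (r : L1.Relations n) (v : Fin n → M i) :
    RelMap (L := L1.sum Language.order) (Sum.inl r) v ↔ RelMap r v := Iff.rfl

theorem sr_strictMono (j : I) : StrictMono (fun m : M j => (toLex ⟨j, m⟩ : Σₗ i, M i)) :=
  fun _ _ h => Sigma.Lex.right _ _ h

theorem sr_le_fiber {j : I} (m m' : M j) :
    (toLex ⟨j, m⟩ : Σₗ i, M i) ≤ toLex ⟨j, m'⟩ ↔ m ≤ m' := (sr_strictMono j).le_iff_le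

theorem sr_lt_of_proj_lt {x y : Σₗ i, M i} (h : (ofLex x).1 < (ofLex y).1) : x < y :=
  Sigma.Lex.left _ _ h

theorem sr_eta (x : Σₗ i, M i) (j : I) (h : (ofLex x).1 = j) :
    x = toLex ⟨j, h ▸ (ofLex x).2⟩ := by subst h; rfl

theorem sr_le_proj {x y : Σₗ i, M i} (h : x ≤ y) : (ofLex x).1 ≤ (ofLex y).1 := by
  rcases Sigma.Lex.le_def.mp h with h' | ⟨h', -⟩
  · exact le_of_lt h'
  · exact le_of_eq h'

theorem sr_le_iff (x y : Σₗ i, M i) :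
    x ≤ y ↔ ((ofLex x).1 < (ofLex y).1 ∨ ((ofLex x).1 = (ofLex y).1 ∧ x ≤ y)) := by
  constructor
  · intro h
    rcases Sigma.Lex.le_def.mp h with h' | ⟨h', -⟩
    · exact Or.inl h'
    · exact Or.inr ⟨h', h⟩
  · rintro (h | ⟨-, h⟩)
    · exact le_of_lt (sr_lt_of_proj_lt h)
    · exact h

theorem sr_proj_le_iff (x y : Σₗ i, M i) :
    (ofLex x).1 ≤ (ofLex y).1 ↔ (x ≤ y ∨ (ofLex x).1 = (ofLex y).1) := by
  constructor
  · intro h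
    rcases eq_or_lt_of_le h with h' | h'
    · exact Or.inr h'
    · exact Or.inl (le_of_lt (sr_lt_of_proj_lt h'))
  · rintro (h | h)
    · exact sr_le_proj h
    · exact le_of_eq h

theorem sr_proj_lt_iff (x y : Σₗ i, M i) :
    (ofLex x).1 < (ofLex y).1 ↔ (x ≤ y ∧ (ofLex x).1 ≠ (ofLex y).1) := by
  constructor
  · intro h
    exact ⟨le_of_lt (sr_lt_of_proj_lt h), ne_of_lt h⟩
  · rintro ⟨h, hne⟩
    exact lt_of_le_of_ne (sr_le_proj h) hne

theorem sr_withinL1 {n} (hn : 0 < n) (r : L1.Relations n) (j : I) (m : Fin n → M j) :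
    RelMap (L := langSD L1 L2) (Sum.inl (Sum.inl (Sum.inl r)))
      (fun k => (toLex ⟨j, m k⟩ : Σₗ i, M i)) ↔ RelMap r m := by
  rw [sr_relMap_L1]
  constructor
  · rintro ⟨i, w, hw, hr⟩
    have hji : j = i := congrArg (fun x => (ofLex x).1) (hw ⟨0, hn⟩)
    subst hji
    have hmw : m = w := by
      funext k
      have := hw k
      exact eq_of_heq (Sigma.mk.inj_iff.mp (by exact congrArg ofLex this)).2
    rwa [hmw]
  · exact fun hr => ⟨j, m, fun k => rfl, hr⟩

theorem sr_nullary {K : Set (Bundled (L1.sum Language.order).Structure)}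
    (hK : ∀ i, (L1.sum Language.order).age (M i) = K)
    (r : (L1.sum Language.order).Relations 0) (i i' : I)
    (v : Fin 0 → M i) (w : Fin 0 → M i') : RelMap r v ↔ RelMap r w := by
  obtain ⟨N, hN⟩ := age.nonempty (L := L1.sum Language.order) (M := M i)
  have hN' : N ∈ (L1.sum Language.order).age (M i') := by
    rw [hK i']; rw [← hK i]; exact hN
  obtain ⟨-, ⟨e⟩⟩ := hN
  obtain ⟨-, ⟨e'⟩⟩ := hN'
  have h1 := e.map_rel r (fun k => k.elim0)
  have h2 := e'.map_rel r (fun k => k.elim0)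
  rw [show v = e ∘ (fun k => k.elim0) from funext fun k => k.elim0,
      show w = e' ∘ (fun k => k.elim0) from funext fun k => k.elim0, h1, h2]

/-- Gluing step: two embeddings into `M` agreeing on `A` give an amalgam in the age of `M`. -/
theorem sr_glue {L : Language} [L.IsRelational] {W : Type} [L.Structure W]
    {A B1 B2 : Bundled L.Structure}
    (hB1fg : Structure.FG L B1) (hB2fg : Structure.FG L B2)
    (f1 : A ↪[L] B1) (f2 : A ↪[L] B2) (h1 : B1 ↪[L] W) (h2 : B2 ↪[L] W)
    (hcomm : ∀ a, h1 (f1 a) = h2 (f2 a)) :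
    ∃ (Q : Bundled L.Structure) (NQ : B1 ↪[L] Q) (PQ : B2 ↪[L] Q),
      Q ∈ L.age W ∧ NQ.comp f1 = PQ.comp f2 := by
  haveI : Finite B1 := hB1fg.finite
  haveI : Finite B2 := hB2fg.finite
  let Q := Substructure.closure L (Set.range h1 ∪ Set.range h2)
  have hQ : Bundled.mk Q ∈ L.age W :=
    age.fg_substructure (Substructure.fg_closure ((Set.finite_range h1).union (Set.finite_range h2)))
  have m1 : ∀ b : B1, h1 b ∈ Q := fun b =>
    Substructure.subset_closure (Or.inl ⟨b, rfl⟩)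
  have m2 : ∀ b : B2, h2 b ∈ Q := fun b =>
    Substructure.subset_closure (Or.inr ⟨b, rfl⟩)
  refine ⟨Bundled.mk Q,
    ⟨⟨fun b => ⟨h1 b, m1 b⟩, fun x y hxy => h1.injective (congrArg Subtype.val hxy)⟩,
      fun {n} f => isEmptyElim f, @fun n r x => by
        show RelMap r (fun k => h1 (x k)) ↔ RelMap r x
        exact h1.map_rel r x⟩,
    ⟨⟨fun b => ⟨h2 b, m2 b⟩, fun x y hxy => h2.injective (congrArg Subtype.val hxy)⟩,
      fun {n} f => isEmptyElim f, @fun n r x => by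
        show RelMap r (fun k => h2 (x k)) ↔ RelMap r x
        exact h2.map_rel r x⟩,
    hQ, ?_⟩
  exact Embedding.ext fun a => Subtype.ext (hcomm a)


theorem sr_fiber_amalg {K : Set (Bundled (L1.sum Language.order).Structure)}
    (hK : ∀ i, (L1.sum Language.order).age (M i) = K) (hKAP : Amalgamation K)
    (i : I) {X0 X1 X2 : Type} [Finite X1] [Finite X2]
    (e1 : X0 → X1) (e2 : X0 → X2)
    (p1 : X1 → Σₗ i, M i) (p2 : X2 → Σₗ i, M i)
    (inj1 : Function.Injective p1) (inj2 : Function.Injective p2)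
    (j1 j2 : I) (hj1 : ∀ x, (ofLex (p1 x)).1 = j1) (hj2 : ∀ x, (ofLex (p2 x)).1 = j2)
    (keyL1 : ∀ (n : ℕ), 0 < n → ∀ (r : L1.Relations n) (v : Fin n → X0),
        (RelMap (L := langSD L1 L2) (Sum.inl (Sum.inl (Sum.inl r))) (fun k => p1 (e1 (v k))) ↔
         RelMap (L := langSD L1 L2) (Sum.inl (Sum.inl (Sum.inl r))) (fun k => p2 (e2 (v k)))))
    (keyLe : ∀ x y : X0, p1 (e1 x) ≤ p1 (e1 y) ↔ p2 (e2 x) ≤ p2 (e2 y))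
    (keyEq : ∀ x y : X0, p1 (e1 x) = p1 (e1 y) ↔ p2 (e2 x) = p2 (e2 y)) :
    ∃ (w1 : X1 → M i) (w2 : X2 → M i),
      Function.Injective w1 ∧ Function.Injective w2 ∧
      (∀ (n : ℕ), 0 < n → ∀ (r : L1.Relations n) (v : Fin n → X1),
        (RelMap r (fun k => w1 (v k)) ↔
         RelMap (L := langSD L1 L2) (Sum.inl (Sum.inl (Sum.inl r))) (fun k => p1 (v k)))) ∧
      (∀ x y : X1, w1 x ≤ w1 y ↔ p1 x ≤ p1 y) ∧
      (∀ (n : ℕ), 0 < n → ∀ (r : L1.Relations n) (v : Fin n → X2),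
        (RelMap r (fun k => w2 (v k)) ↔
         RelMap (L := langSD L1 L2) (Sum.inl (Sum.inl (Sum.inl r))) (fun k => p2 (v k)))) ∧
      (∀ x y : X2, w2 x ≤ w2 y ↔ p2 x ≤ p2 y) ∧
      (∀ x : X0, w1 (e1 x) = w2 (e2 x)) := by
  classical
  set m1 : X1 → M j1 := fun x => (hj1 x) ▸ (ofLex (p1 x)).2 with hm1def
  set m2 : X2 → M j2 := fun x => (hj2 x) ▸ (ofLex (p2 x)).2 with hm2def
  have hm1 : ∀ x, p1 x = toLex ⟨j1, m1 x⟩ := fun x => sr_eta _ _ (hj1 x)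
  have hm2 : ∀ x, p2 x = toLex ⟨j2, m2 x⟩ := fun x => sr_eta _ _ (hj2 x)
  have m1inj : Function.Injective m1 := by
    intro x y h; apply inj1; rw [hm1 x, hm1 y, h]
  have m2inj : Function.Injective m2 := by
    intro x y h; apply inj2; rw [hm2 x, hm2 y, h]
  have meq : ∀ x y : X0, (m1 (e1 x) = m1 (e1 y) ↔ m2 (e2 x) = m2 (e2 y)) := by
    intro x y
    have hh1 : m1 (e1 x) = m1 (e1 y) ↔ p1 (e1 x) = p1 (e1 y) :=
      ⟨fun h => by rw [hm1, hm1, h], fun h => congrArg m1 (inj1 h)⟩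
    have hh2 : m2 (e2 x) = m2 (e2 y) ↔ p2 (e2 x) = p2 (e2 y) :=
      ⟨fun h => by rw [hm2, hm2, h], fun h => congrArg m2 (inj2 h)⟩
    rw [hh1, hh2]; exact keyEq x y
  have keyM : ∀ (n : ℕ) (r : (L1.sum Language.order).Relations n) (v : Fin n → X0),
      (RelMap r (fun k => m1 (e1 (v k))) ↔ RelMap r (fun k => m2 (e2 (v k)))) := by
    intro n r v
    rcases Nat.eq_zero_or_pos n with hn | hn
    · subst hn
      exact sr_nullary hK r j1 j2 _ _
    · cases r with
      | inl r =>
        rw [sr_relMapF_L1, sr_relMapF_L1,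
          ← sr_withinL1 (L2 := L2) hn r j1, ← sr_withinL1 (L2 := L2) hn r j2,
          show (fun k => (toLex ⟨j1, m1 (e1 (v k))⟩ : Σₗ i, M i)) = fun k => p1 (e1 (v k)) from
            funext fun k => (hm1 _).symm,
          show (fun k => (toLex ⟨j2, m2 (e2 (v k))⟩ : Σₗ i, M i)) = fun k => p2 (e2 (v k)) from
            funext fun k => (hm2 _).symm]
        exact keyL1 n hn r v
      | inr r =>
        cases r
        rw [sr_relMapF_le, sr_relMapF_le, ← sr_le_fiber (M := M) (m1 (e1 (v 0))),
          ← sr_le_fiber (M := M) (m2 (e2 (v 0))), ← hm1, ← hm1, ← hm2, ← hm2]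
        exact keyLe (v 0) (v 1)
  set F1 := Substructure.closure (L1.sum Language.order) (Set.range m1) with hF1def
  set F2 := Substructure.closure (L1.sum Language.order) (Set.range m2) with hF2def
  set FA := Substructure.closure (L1.sum Language.order)
    (Set.range fun x : X0 => m1 (e1 x)) with hFAdef
  have hFA1 : FA ≤ F1 := Substructure.closure_mono (by rintro _ ⟨x, rfl⟩; exact ⟨e1 x, rfl⟩)
  have hF1K : Bundled.mk ↥F1 ∈ K := by
    rw [← hK j1]
    exact age.fg_substructure (Substructure.fg_closure (Set.finite_range _))
  have hF2K : Bundled.mk ↥F2 ∈ K := by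
    rw [← hK j2]
    exact age.fg_substructure (Substructure.fg_closure (Set.finite_range _))
  have hFAK : Bundled.mk ↥FA ∈ K := by
    rw [← hK j1]
    exact age.fg_substructure (Substructure.fg_closure
      ((Set.finite_range m1).subset (by rintro _ ⟨x, rfl⟩; exact ⟨e1 x, rfl⟩)))
  have memFA : ∀ z : FA, ∃ x : X0, m1 (e1 x) = (z : M j1) := fun z =>
    (Substructure.mem_closure_iff_of_isRelational (L := L1.sum Language.order)
      (Set.range fun x : X0 => m1 (e1 x)) (z : M j1)).mp z.2
  choose pk hpk using memFA
  have χinj : Function.Injective (fun z : FA =>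
      (⟨m2 (e2 (pk z)), Substructure.subset_closure ⟨e2 (pk z), rfl⟩⟩ : F2)) := by
    intro z z' h
    have h' : m2 (e2 (pk z)) = m2 (e2 (pk z')) := congrArg Subtype.val h
    have h'' := (meq _ _).mpr h'
    rw [hpk z, hpk z'] at h''
    exact Subtype.ext h''
  let χ : FA ↪[L1.sum Language.order] F2 :=
    ⟨⟨fun z => ⟨m2 (e2 (pk z)), Substructure.subset_closure ⟨e2 (pk z), rfl⟩⟩, χinj⟩,
      fun {n} f => isEmptyElim f, @fun n r v => by
        show RelMap r (fun k => m2 (e2 (pk (v k)))) ↔ RelMap r (fun k => ((v k : M j1)))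
        rw [show (fun k => ((v k : M j1))) = fun k => m1 (e1 (pk (v k))) from
          funext fun k => (hpk (v k)).symm]
        exact (keyM n r (fun k => pk (v k))).symm⟩
  obtain ⟨G, q1, q2, hG, hq⟩ := hKAP (Bundled.mk ↥FA) (Bundled.mk ↥F1) (Bundled.mk ↥F2)
    (Substructure.inclusion hFA1) χ hFAK hF1K hF2K
  rw [← hK i] at hG
  obtain ⟨-, ⟨θ⟩⟩ := hG
  refine ⟨fun x => θ (q1 ⟨m1 x, Substructure.subset_closure ⟨x, rfl⟩⟩),
          fun x => θ (q2 ⟨m2 x, Substructure.subset_closure ⟨x, rfl⟩⟩),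
          ?_, ?_, ?_, ?_, ?_, ?_, ?_⟩
  · intro x y h
    exact m1inj (congrArg Subtype.val (q1.injective (θ.injective h)))
  · intro x y h
    exact m2inj (congrArg Subtype.val (q2.injective (θ.injective h)))
  · intro n hn r v
    have s1 : RelMap (L := L1.sum Language.order) (Sum.inl r)
        (fun k => θ (q1 ⟨m1 (v k), Substructure.subset_closure ⟨v k, rfl⟩⟩)) ↔
        RelMap (L := L1.sum Language.order) (Sum.inl r)
        (fun k => q1 ⟨m1 (v k), Substructure.subset_closure ⟨v k, rfl⟩⟩) := θ.map_rel _ _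
    have s2 : RelMap (L := L1.sum Language.order) (Sum.inl r)
        (fun k => q1 ⟨m1 (v k), Substructure.subset_closure ⟨v k, rfl⟩⟩) ↔
        RelMap (L := L1.sum Language.order) (Sum.inl r) (fun k => m1 (v k)) := by
      have := q1.map_rel (Sum.inl r)
        (fun k => (⟨m1 (v k), Substructure.subset_closure ⟨v k, rfl⟩⟩ : F1))
      exact this
    rw [show (RelMap r fun k => θ (q1 ⟨m1 (v k), Substructure.subset_closure ⟨v k, rfl⟩⟩)) =
        (RelMap (L := L1.sum Language.order) (Sum.inl r)
          fun k => θ (q1 ⟨m1 (v k), Substructure.subset_closure ⟨v k, rfl⟩⟩)) from rfl,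
      s1, s2, sr_relMapF_L1, ← sr_withinL1 (L2 := L2) hn r j1,
      show (fun k => (toLex ⟨j1, m1 (v k)⟩ : Σₗ i, M i)) = fun k => p1 (v k) from
        funext fun k => (hm1 _).symm]
  · intro x y
    have s1 : θ (q1 ⟨m1 x, Substructure.subset_closure ⟨x, rfl⟩⟩) ≤
        θ (q1 ⟨m1 y, Substructure.subset_closure ⟨y, rfl⟩⟩) ↔
        RelMap (L := L1.sum Language.order) (Sum.inr Language.orderRel.le)
          ![q1 ⟨m1 x, Substructure.subset_closure ⟨x, rfl⟩⟩,
            q1 ⟨m1 y, Substructure.subset_closure ⟨y, rfl⟩⟩] := by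
      have := θ.map_rel (Sum.inr Language.orderRel.le)
        ![q1 ⟨m1 x, Substructure.subset_closure ⟨x, rfl⟩⟩,
          q1 ⟨m1 y, Substructure.subset_closure ⟨y, rfl⟩⟩]
      exact Iff.symm (Iff.trans (Iff.symm this) (by rw [sr_relMapF_le]; simp))
    have s2 : RelMap (L := L1.sum Language.order) (Sum.inr Language.orderRel.le)
        ![q1 ⟨m1 x, Substructure.subset_closure ⟨x, rfl⟩⟩,
          q1 ⟨m1 y, Substructure.subset_closure ⟨y, rfl⟩⟩] ↔ m1 x ≤ m1 y := by
      have := q1.map_rel (Sum.inr Language.orderRel.le)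
        ![(⟨m1 x, Substructure.subset_closure ⟨x, rfl⟩⟩ : F1),
          (⟨m1 y, Substructure.subset_closure ⟨y, rfl⟩⟩ : F1)]
      refine Iff.trans (Iff.symm ?_) (Iff.trans this ?_)
      · exact Iff.of_eq (congrArg _ (by funext k; fin_cases k <;> rfl))
      · show RelMap (L := L1.sum Language.order) (Sum.inr Language.orderRel.le)
          (fun k => ((![(⟨m1 x, Substructure.subset_closure ⟨x, rfl⟩⟩ : F1),
            (⟨m1 y, Substructure.subset_closure ⟨y, rfl⟩⟩ : F1)] k : M j1))) ↔ m1 x ≤ m1 y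
        rw [sr_relMapF_le]
        simp
    rw [s1, s2, ← sr_le_fiber (M := M) (m1 x) (m1 y), ← hm1, ← hm1]
  · intro n hn r v
    have s1 : RelMap (L := L1.sum Language.order) (Sum.inl r)
        (fun k => θ (q2 ⟨m2 (v k), Substructure.subset_closure ⟨v k, rfl⟩⟩)) ↔
        RelMap (L := L1.sum Language.order) (Sum.inl r)
        (fun k => q2 ⟨m2 (v k), Substructure.subset_closure ⟨v k, rfl⟩⟩) := θ.map_rel _ _
    have s2 : RelMap (L := L1.sum Language.order) (Sum.inl r)
        (fun k => q2 ⟨m2 (v k), Substructure.subset_closure ⟨v k, rfl⟩⟩) ↔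
        RelMap (L := L1.sum Language.order) (Sum.inl r) (fun k => m2 (v k)) := by
      have := q2.map_rel (Sum.inl r)
        (fun k => (⟨m2 (v k), Substructure.subset_closure ⟨v k, rfl⟩⟩ : F2))
      exact this
    rw [show (RelMap r fun k => θ (q2 ⟨m2 (v k), Substructure.subset_closure ⟨v k, rfl⟩⟩)) =
        (RelMap (L := L1.sum Language.order) (Sum.inl r)
          fun k => θ (q2 ⟨m2 (v k), Substructure.subset_closure ⟨v k, rfl⟩⟩)) from rfl,
      s1, s2, sr_relMapF_L1, ← sr_withinL1 (L2 := L2) hn r j2,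
      show (fun k => (toLex ⟨j2, m2 (v k)⟩ : Σₗ i, M i)) = fun k => p2 (v k) from
        funext fun k => (hm2 _).symm]
  · intro x y
    have s1 : θ (q2 ⟨m2 x, Substructure.subset_closure ⟨x, rfl⟩⟩) ≤
        θ (q2 ⟨m2 y, Substructure.subset_closure ⟨y, rfl⟩⟩) ↔
        RelMap (L := L1.sum Language.order) (Sum.inr Language.orderRel.le)
          ![q2 ⟨m2 x, Substructure.subset_closure ⟨x, rfl⟩⟩,
            q2 ⟨m2 y, Substructure.subset_closure ⟨y, rfl⟩⟩] := by
      have := θ.map_rel (Sum.inr Language.orderRel.le)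
        ![q2 ⟨m2 x, Substructure.subset_closure ⟨x, rfl⟩⟩,
          q2 ⟨m2 y, Substructure.subset_closure ⟨y, rfl⟩⟩]
      exact Iff.symm (Iff.trans (Iff.symm this) (by rw [sr_relMapF_le]; simp))
    have s2 : RelMap (L := L1.sum Language.order) (Sum.inr Language.orderRel.le)
        ![q2 ⟨m2 x, Substructure.subset_closure ⟨x, rfl⟩⟩,
          q2 ⟨m2 y, Substructure.subset_closure ⟨y, rfl⟩⟩] ↔ m2 x ≤ m2 y := by
      have := q2.map_rel (Sum.inr Language.orderRel.le)
        ![(⟨m2 x, Substructure.subset_closure ⟨x, rfl⟩⟩ : F2),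
          (⟨m2 y, Substructure.subset_closure ⟨y, rfl⟩⟩ : F2)]
      refine Iff.trans (Iff.symm ?_) (Iff.trans this ?_)
      · exact Iff.of_eq (congrArg _ (by funext k; fin_cases k <;> rfl))
      · show RelMap (L := L1.sum Language.order) (Sum.inr Language.orderRel.le)
          (fun k => ((![(⟨m2 x, Substructure.subset_closure ⟨x, rfl⟩⟩ : F2),
            (⟨m2 y, Substructure.subset_closure ⟨y, rfl⟩⟩ : F2)] k : M j2))) ↔ m2 x ≤ m2 y
        rw [sr_relMapF_le]
        simp
    rw [s1, s2, ← sr_le_fiber (M := M) (m2 x) (m2 y), ← hm2, ← hm2]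
  · intro x
    have hz := DFunLike.congr_fun hq
      (⟨m1 (e1 x), Substructure.subset_closure ⟨x, rfl⟩⟩ : FA)
    have hincl : (Substructure.inclusion hFA1)
        (⟨m1 (e1 x), Substructure.subset_closure ⟨x, rfl⟩⟩ : FA) =
        (⟨m1 (e1 x), Substructure.subset_closure ⟨e1 x, rfl⟩⟩ : F1) := Subtype.ext rfl
    have hχ : χ (⟨m1 (e1 x), Substructure.subset_closure ⟨x, rfl⟩⟩ : FA) =
        (⟨m2 (e2 x), Substructure.subset_closure ⟨e2 x, rfl⟩⟩ : F2) := by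
      apply Subtype.ext
      show m2 (e2 (pk ⟨m1 (e1 x), Substructure.subset_closure ⟨x, rfl⟩⟩)) = m2 (e2 x)
      apply (meq _ _).mp
      exact hpk ⟨m1 (e1 x), Substructure.subset_closure ⟨x, rfl⟩⟩
    show θ (q1 ⟨m1 (e1 x), Substructure.subset_closure ⟨e1 x, rfl⟩⟩) =
      θ (q2 ⟨m2 (e2 x), Substructure.subset_closure ⟨e2 x, rfl⟩⟩)
    rw [← hincl, ← hχ]
    exact congrArg θ hz

theorem sr_AP {K : Set (Bundled (L1.sum Language.order).Structure)}
    (hK : ∀ i, (L1.sum Language.order).age (M i) = K)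
    (hIAP : Amalgamation ((L2.sum Language.order).age I))
    (hKAP : Amalgamation K) :
    Amalgamation ((langSD L1 L2).age (Σₗ i, M i)) := by
  classical
  intro A B1 B2 f1 f2 hA hB1 hB2
  obtain ⟨hB1fg, ⟨b1⟩⟩ := hB1
  obtain ⟨hB2fg, ⟨b2⟩⟩ := hB2
  haveI : Finite A := hA.1.finite
  haveI : Finite B1 := hB1fg.finite
  haveI : Finite B2 := hB2fg.finite
  -- same quantifier-free type of the two images of A
  have keyE : ∀ x y : A, ((ofLex (b1 (f1 x))).1 = (ofLex (b1 (f1 y))).1 ↔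
      (ofLex (b2 (f2 x))).1 = (ofLex (b2 (f2 y))).1) := by
    intro x y
    have h1 := (b1.comp f1).map_rel
      (Sum.inl (Sum.inr EqSymb.E) : (langSD L1 L2).Relations 2) ![x, y]
    have h2 := (b2.comp f2).map_rel (Sum.inl (Sum.inr EqSymb.E)) ![x, y]
    rw [sr_relMap_E] at h1 h2
    simp only [Function.comp_apply, Embedding.comp_apply, Matrix.cons_val_zero,
      Matrix.cons_val_one, Matrix.head_cons] at h1 h2
    rw [h1, h2]
  have keyLe : ∀ x y : A, (b1 (f1 x) ≤ b1 (f1 y) ↔ b2 (f2 x) ≤ b2 (f2 y)) := by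
    intro x y
    have h1 := (b1.comp f1).map_rel
      (Sum.inl (Sum.inl (Sum.inr Language.orderRel.le)) : (langSD L1 L2).Relations 2) ![x, y]
    have h2 := (b2.comp f2).map_rel (Sum.inl (Sum.inl (Sum.inr Language.orderRel.le))) ![x, y]
    rw [sr_relMap_leSD] at h1 h2
    simp only [Function.comp_apply, Embedding.comp_apply, Matrix.cons_val_zero,
      Matrix.cons_val_one, Matrix.head_cons] at h1 h2
    rw [h1, h2]
  have keyL1A : ∀ (n : ℕ) (r : L1.Relations n) (v : Fin n → A),
      (RelMap (L := langSD L1 L2) (Sum.inl (Sum.inl (Sum.inl r))) (fun k => b1 (f1 (v k))) ↔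
       RelMap (L := langSD L1 L2) (Sum.inl (Sum.inl (Sum.inl r))) (fun k => b2 (f2 (v k)))) := by
    intro n r v
    have h1 := (b1.comp f1).map_rel (Sum.inl (Sum.inl (Sum.inl r))) v
    have h2 := (b2.comp f2).map_rel (Sum.inl (Sum.inl (Sum.inl r))) v
    exact h1.trans h2.symm
  have keyL2A : ∀ (n : ℕ) (r : L2.Relations n) (v : Fin n → A),
      (RelMap r (fun k => (ofLex (b1 (f1 (v k)))).1) ↔
       RelMap r (fun k => (ofLex (b2 (f2 (v k)))).1)) := by
    intro n r v
    have h1 := (b1.comp f1).map_rel (Sum.inr r : (langSD L1 L2).Relations n) v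
    have h2 := (b2.comp f2).map_rel (Sum.inr r) v
    exact h1.trans h2.symm
  -- index substructures
  set J1 := Substructure.closure (L2.sum Language.order)
    (Set.range fun b : B1 => (ofLex (b1 b)).1) with hJ1def
  set J2 := Substructure.closure (L2.sum Language.order)
    (Set.range fun b : B2 => (ofLex (b2 b)).1) with hJ2def
  set JA := Substructure.closure (L2.sum Language.order)
    (Set.range fun a : A => (ofLex (b1 (f1 a))).1) with hJAdef
  have hJA1 : JA ≤ J1 := Substructure.closure_mono (by rintro _ ⟨a, rfl⟩; exact ⟨f1 a, rfl⟩)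
  have hJ1age : Bundled.mk ↥J1 ∈ (L2.sum Language.order).age I :=
    age.fg_substructure (Substructure.fg_closure (Set.finite_range _))
  have hJ2age : Bundled.mk ↥J2 ∈ (L2.sum Language.order).age I :=
    age.fg_substructure (Substructure.fg_closure (Set.finite_range _))
  have hJAage : Bundled.mk ↥JA ∈ (L2.sum Language.order).age I :=
    age.fg_substructure (Substructure.fg_closure (Set.finite_range _))
  have memJA : ∀ z : JA, ∃ a : A, (ofLex (b1 (f1 a))).1 = (z : I) := fun z =>
    (Substructure.mem_closure_iff_of_isRelational (L := L2.sum Language.order)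
      (Set.range fun a : A => (ofLex (b1 (f1 a))).1) (z : I)).mp z.2
  choose pk hpk using memJA
  have ψinj : Function.Injective (fun z : JA =>
      (⟨(ofLex (b2 (f2 (pk z)))).1, Substructure.subset_closure ⟨f2 (pk z), rfl⟩⟩ : J2)) := by
    intro z z' h
    have h' := congrArg Subtype.val h
    have h'' := (keyE _ _).mpr h'
    rw [hpk z, hpk z'] at h''
    exact Subtype.ext h''
  let ψ : JA ↪[L2.sum Language.order] J2 :=
    ⟨⟨fun z => ⟨(ofLex (b2 (f2 (pk z)))).1, Substructure.subset_closure ⟨f2 (pk z), rfl⟩⟩, ψinj⟩,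
      fun {n} f => isEmptyElim f, @fun n r v => by
        show RelMap r (fun k => (ofLex (b2 (f2 (pk (v k))))).1) ↔ RelMap r (fun k => ((v k : I)))
        rw [show (fun k => ((v k : I))) = fun k => (ofLex (b1 (f1 (pk (v k))))).1 from
          funext fun k => (hpk (v k)).symm]
        cases r with
        | inl r => exact (keyL2A n r (fun k => pk (v k))).symm
        | inr r =>
          cases r
          rw [sr_relMapI_le, sr_relMapI_le, sr_proj_le_iff, sr_proj_le_iff,
            ← keyLe (pk (v 0)) (pk (v 1)), ← keyE (pk (v 0)) (pk (v 1))]⟩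
  obtain ⟨D, u1, u2, hD, hqD⟩ := hIAP (Bundled.mk ↥JA) (Bundled.mk ↥J1) (Bundled.mk ↥J2)
    (Substructure.inclusion hJA1) ψ hJAage hJ1age hJ2age
  obtain ⟨-, ⟨τ⟩⟩ := hD
  -- the new indices
  let N1 : B1 → I := fun b => τ (u1 ⟨(ofLex (b1 b)).1, Substructure.subset_closure ⟨b, rfl⟩⟩)
  let N2 : B2 → I := fun b => τ (u2 ⟨(ofLex (b2 b)).1, Substructure.subset_closure ⟨b, rfl⟩⟩)
  have hNcomm : ∀ a : A, N1 (f1 a) = N2 (f2 a) := by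
    intro a
    have hz := DFunLike.congr_fun hqD
      (⟨(ofLex (b1 (f1 a))).1, Substructure.subset_closure ⟨a, rfl⟩⟩ : JA)
    have h1 : (Substructure.inclusion hJA1)
        (⟨(ofLex (b1 (f1 a))).1, Substructure.subset_closure ⟨a, rfl⟩⟩ : JA) =
        (⟨(ofLex (b1 (f1 a))).1, Substructure.subset_closure ⟨f1 a, rfl⟩⟩ : J1) :=
      Subtype.ext rfl
    have h2 : ψ (⟨(ofLex (b1 (f1 a))).1, Substructure.subset_closure ⟨a, rfl⟩⟩ : JA) =
        (⟨(ofLex (b2 (f2 a))).1, Substructure.subset_closure ⟨f2 a, rfl⟩⟩ : J2) := by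
      apply Subtype.ext
      show (ofLex (b2 (f2 (pk _)))).1 = (ofLex (b2 (f2 a))).1
      apply (keyE _ _).mp
      exact hpk _
    show τ (u1 ⟨(ofLex (b1 (f1 a))).1, Substructure.subset_closure ⟨f1 a, rfl⟩⟩) =
      τ (u2 ⟨(ofLex (b2 (f2 a))).1, Substructure.subset_closure ⟨f2 a, rfl⟩⟩)
    rw [← h1, ← h2]
    exact congrArg τ hz
  have hN1E : ∀ b b' : B1, (N1 b = N1 b' ↔ (ofLex (b1 b)).1 = (ofLex (b1 b')).1) := by
    intro b b'
    constructor
    · intro h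
      have h' := u1.injective (τ.injective h)
      exact congrArg Subtype.val h'
    · intro h
      exact congrArg (fun z => τ (u1 z)) (Subtype.ext h)
  have hN2E : ∀ b b' : B2, (N2 b = N2 b' ↔ (ofLex (b2 b)).1 = (ofLex (b2 b')).1) := by
    intro b b'
    constructor
    · intro h
      have h' := u2.injective (τ.injective h)
      exact congrArg Subtype.val h'
    · intro h
      exact congrArg (fun z => τ (u2 z)) (Subtype.ext h)
  have hN1le : ∀ b b' : B1, (N1 b ≤ N1 b' ↔ (ofLex (b1 b)).1 ≤ (ofLex (b1 b')).1) := by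
    intro b b'
    have h := (τ.comp u1).map_rel (Sum.inr Language.orderRel.le)
      ![⟨(ofLex (b1 b)).1, Substructure.subset_closure ⟨b, rfl⟩⟩,
        ⟨(ofLex (b1 b')).1, Substructure.subset_closure ⟨b', rfl⟩⟩]
    have h1 : N1 b ≤ N1 b' ↔ RelMap (L := L2.sum Language.order)
        (Sum.inr Language.orderRel.le) (⇑(τ.comp u1) ∘
        ![⟨(ofLex (b1 b)).1, Substructure.subset_closure ⟨b, rfl⟩⟩,
          ⟨(ofLex (b1 b')).1, Substructure.subset_closure ⟨b', rfl⟩⟩]) := Iff.rfl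
    have h2 : RelMap (L := L2.sum Language.order) (Sum.inr Language.orderRel.le) (M := J1)
        ![⟨(ofLex (b1 b)).1, Substructure.subset_closure ⟨b, rfl⟩⟩,
          ⟨(ofLex (b1 b')).1, Substructure.subset_closure ⟨b', rfl⟩⟩] ↔
        ((ofLex (b1 b)).1 ≤ (ofLex (b1 b')).1) := Iff.rfl
    exact h1.trans (h.trans h2)
  have hN2le : ∀ b b' : B2, (N2 b ≤ N2 b' ↔ (ofLex (b2 b)).1 ≤ (ofLex (b2 b')).1) := by
    intro b b'
    have h := (τ.comp u2).map_rel (Sum.inr Language.orderRel.le)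
      ![⟨(ofLex (b2 b)).1, Substructure.subset_closure ⟨b, rfl⟩⟩,
        ⟨(ofLex (b2 b')).1, Substructure.subset_closure ⟨b', rfl⟩⟩]
    have h1 : N2 b ≤ N2 b' ↔ RelMap (L := L2.sum Language.order)
        (Sum.inr Language.orderRel.le) (⇑(τ.comp u2) ∘
        ![⟨(ofLex (b2 b)).1, Substructure.subset_closure ⟨b, rfl⟩⟩,
          ⟨(ofLex (b2 b')).1, Substructure.subset_closure ⟨b', rfl⟩⟩]) := Iff.rfl
    have h2 : RelMap (L := L2.sum Language.order) (Sum.inr Language.orderRel.le) (M := J2)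
        ![⟨(ofLex (b2 b)).1, Substructure.subset_closure ⟨b, rfl⟩⟩,
          ⟨(ofLex (b2 b')).1, Substructure.subset_closure ⟨b', rfl⟩⟩] ↔
        ((ofLex (b2 b)).1 ≤ (ofLex (b2 b')).1) := Iff.rfl
    exact h1.trans (h.trans h2)
  have hN1lt : ∀ b b' : B1, (N1 b < N1 b' ↔ (ofLex (b1 b)).1 < (ofLex (b1 b')).1) := by
    intro b b'
    rw [lt_iff_le_not_ge, lt_iff_le_not_ge, hN1le, hN1le]
  have hN2lt : ∀ b b' : B2, (N2 b < N2 b' ↔ (ofLex (b2 b)).1 < (ofLex (b2 b')).1) := by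
    intro b b'
    rw [lt_iff_le_not_ge, lt_iff_le_not_ge, hN2le, hN2le]
  have hN1L2 : ∀ (n : ℕ) (r : L2.Relations n) (v : Fin n → B1),
      (RelMap r (fun k => N1 (v k)) ↔ RelMap r (fun k => (ofLex (b1 (v k))).1)) := by
    intro n r v
    exact (τ.comp u1).map_rel (Sum.inl r)
      (fun k => (⟨(ofLex (b1 (v k))).1, Substructure.subset_closure ⟨v k, rfl⟩⟩ : J1))
  have hN2L2 : ∀ (n : ℕ) (r : L2.Relations n) (v : Fin n → B2),
      (RelMap r (fun k => N2 (v k)) ↔ RelMap r (fun k => (ofLex (b2 (v k))).1)) := by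
    intro n r v
    exact (τ.comp u2).map_rel (Sum.inl r)
      (fun k => (⟨(ofLex (b2 (v k))).1, Substructure.subset_closure ⟨v k, rfl⟩⟩ : J2))
  -- fiberwise amalgamation
  have Q : ∀ i : I, ∃ (w1 : {b : B1 // N1 b = i} → M i) (w2 : {b : B2 // N2 b = i} → M i),
      Function.Injective w1 ∧ Function.Injective w2 ∧
      (∀ (n : ℕ), 0 < n → ∀ (r : L1.Relations n) (v : Fin n → {b : B1 // N1 b = i}),
        (RelMap r (fun k => w1 (v k)) ↔
         RelMap (L := langSD L1 L2) (Sum.inl (Sum.inl (Sum.inl r))) (fun k => b1 (v k).1))) ∧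
      (∀ x y : {b : B1 // N1 b = i}, (w1 x ≤ w1 y ↔ b1 x.1 ≤ b1 y.1)) ∧
      (∀ (n : ℕ), 0 < n → ∀ (r : L1.Relations n) (v : Fin n → {b : B2 // N2 b = i}),
        (RelMap r (fun k => w2 (v k)) ↔
         RelMap (L := langSD L1 L2) (Sum.inl (Sum.inl (Sum.inl r))) (fun k => b2 (v k).1))) ∧
      (∀ x y : {b : B2 // N2 b = i}, (w2 x ≤ w2 y ↔ b2 x.1 ≤ b2 y.1)) ∧
      (∀ (a : A) (ha1 : N1 (f1 a) = i) (ha2 : N2 (f2 a) = i),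
        w1 ⟨f1 a, ha1⟩ = w2 ⟨f2 a, ha2⟩) := by
    intro i
    let j1 : I := if h : ∃ b : B1, N1 b = i then (ofLex (b1 h.choose)).1 else i
    let j2 : I := if h : ∃ b : B2, N2 b = i then (ofLex (b2 h.choose)).1 else i
    have hj1 : ∀ x : {b : B1 // N1 b = i}, (ofLex (b1 x.1)).1 = j1 := by
      intro x
      have hex : ∃ b : B1, N1 b = i := ⟨x.1, x.2⟩
      have hj : j1 = (ofLex (b1 hex.choose)).1 := dif_pos hex
      rw [hj]
      exact (hN1E _ _).mp (x.2.trans hex.choose_spec.symm)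
    have hj2 : ∀ x : {b : B2 // N2 b = i}, (ofLex (b2 x.1)).1 = j2 := by
      intro x
      have hex : ∃ b : B2, N2 b = i := ⟨x.1, x.2⟩
      have hj : j2 = (ofLex (b2 hex.choose)).1 := dif_pos hex
      rw [hj]
      exact (hN2E _ _).mp (x.2.trans hex.choose_spec.symm)
    obtain ⟨w1, w2, i1, i2, r1, o1, r2, o2, cc⟩ :=
      sr_fiber_amalg hK hKAP i
        (fun a : {a : A // N1 (f1 a) = i} => (⟨f1 a.1, a.2⟩ : {b : B1 // N1 b = i}))
        (fun a : {a : A // N1 (f1 a) = i} =>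
          (⟨f2 a.1, (hNcomm a.1).symm.trans a.2⟩ : {b : B2 // N2 b = i}))
        (fun x => b1 x.1) (fun x => b2 x.1)
        (fun x y h => Subtype.ext (b1.injective h)) (fun x y h => Subtype.ext (b2.injective h))
        j1 j2 hj1 hj2
        (fun n _ r v => keyL1A n r (fun k => (v k).1))
        (fun x y => keyLe x.1 y.1)
        (fun x y => ⟨fun h => congrArg (fun a => b2 (f2 a)) (f1.injective (b1.injective h)),
                     fun h => congrArg (fun a => b1 (f1 a)) (f2.injective (b2.injective h))⟩)
    exact ⟨w1, w2, i1, i2, r1, o1, r2, o2, fun a ha1 ha2 => cc ⟨a, ha1⟩⟩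
  choose w1 w2 hi1 hi2 hr1 ho1 hr2 ho2 hcc using Q
  -- the new embeddings
  let H1 : B1 → (Σₗ i, M i) := fun b => toLex ⟨N1 b, w1 (N1 b) ⟨b, rfl⟩⟩
  let H2 : B2 → (Σₗ i, M i) := fun b => toLex ⟨N2 b, w2 (N2 b) ⟨b, rfl⟩⟩
  have hH1cast : ∀ (b : B1) (i : I) (h : N1 b = i), H1 b = toLex ⟨i, w1 i ⟨b, h⟩⟩ := by
    intro b i h; subst h; rfl
  have hH2cast : ∀ (b : B2) (i : I) (h : N2 b = i), H2 b = toLex ⟨i, w2 i ⟨b, h⟩⟩ := by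
    intro b i h; subst h; rfl
  have hH1inj : Function.Injective H1 := by
    intro b b' h
    have hi : N1 b = N1 b' := congrArg (fun x => (ofLex x).1) h
    rw [hH1cast b' (N1 b) hi.symm] at h
    have h2 := (Sigma.mk.inj_iff.mp (congrArg ofLex h)).2
    have h3 : w1 (N1 b) ⟨b, rfl⟩ = w1 (N1 b) ⟨b', hi.symm⟩ := eq_of_heq h2
    exact congrArg Subtype.val (hi1 (N1 b) h3)
  have hH2inj : Function.Injective H2 := by
    intro b b' h
    have hi : N2 b = N2 b' := congrArg (fun x => (ofLex x).1) h
    rw [hH2cast b' (N2 b) hi.symm] at h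
    have h2 := (Sigma.mk.inj_iff.mp (congrArg ofLex h)).2
    have h3 : w2 (N2 b) ⟨b, rfl⟩ = w2 (N2 b) ⟨b', hi.symm⟩ := eq_of_heq h2
    exact congrArg Subtype.val (hi2 (N2 b) h3)
  have hH1le : ∀ b b' : B1, (H1 b ≤ H1 b' ↔ b1 b ≤ b1 b') := by
    intro b b'
    rw [sr_le_iff (H1 b) (H1 b'), sr_le_iff (b1 b) (b1 b')]
    constructor
    · rintro (h | ⟨he, hle⟩)
      · exact Or.inl ((hN1lt b b').mp h)
      · have he' : N1 b = N1 b' := he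
        refine Or.inr ⟨(hN1E b b').mp he', ?_⟩
        rw [hH1cast b (N1 b) rfl, hH1cast b' (N1 b) he'.symm, sr_le_fiber] at hle
        exact (ho1 (N1 b) ⟨b, rfl⟩ ⟨b', he'.symm⟩).mp hle
    · rintro (h | ⟨he, hle⟩)
      · exact Or.inl ((hN1lt b b').mpr h)
      · have he' : N1 b = N1 b' := (hN1E b b').mpr he
        refine Or.inr ⟨he', ?_⟩
        rw [hH1cast b (N1 b) rfl, hH1cast b' (N1 b) he'.symm, sr_le_fiber]
        exact (ho1 (N1 b) ⟨b, rfl⟩ ⟨b', he'.symm⟩).mpr hle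
  have hH2le : ∀ b b' : B2, (H2 b ≤ H2 b' ↔ b2 b ≤ b2 b') := by
    intro b b'
    rw [sr_le_iff (H2 b) (H2 b'), sr_le_iff (b2 b) (b2 b')]
    constructor
    · rintro (h | ⟨he, hle⟩)
      · exact Or.inl ((hN2lt b b').mp h)
      · have he' : N2 b = N2 b' := he
        refine Or.inr ⟨(hN2E b b').mp he', ?_⟩
        rw [hH2cast b (N2 b) rfl, hH2cast b' (N2 b) he'.symm, sr_le_fiber] at hle
        exact (ho2 (N2 b) ⟨b, rfl⟩ ⟨b', he'.symm⟩).mp hle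
    · rintro (h | ⟨he, hle⟩)
      · exact Or.inl ((hN2lt b b').mpr h)
      · have he' : N2 b = N2 b' := (hN2E b b').mpr he
        refine Or.inr ⟨he', ?_⟩
        rw [hH2cast b (N2 b) rfl, hH2cast b' (N2 b) he'.symm, sr_le_fiber]
        exact (ho2 (N2 b) ⟨b, rfl⟩ ⟨b', he'.symm⟩).mpr hle
  have hH1rel : ∀ (n : ℕ) (r : (langSD L1 L2).Relations n) (v : Fin n → B1),
      (RelMap r (fun k => H1 (v k)) ↔ RelMap r (fun k => b1 (v k))) := by
    intro n r v
    rcases r with ((r | r) | r) | r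
    · rcases Nat.eq_zero_or_pos n with hn | hn
      · subst hn
        rw [show (fun k : Fin 0 => H1 (v k)) = (fun k => b1 (v k)) from
          funext fun k => k.elim0]
      · by_cases hcl : ∀ k, N1 (v k) = N1 (v ⟨0, hn⟩)
        · rw [show (fun k => H1 (v k)) =
            (fun k => (toLex ⟨N1 (v ⟨0, hn⟩), w1 _ ⟨v k, hcl k⟩⟩ : Σₗ i, M i)) from
            funext fun k => hH1cast _ _ (hcl k),
            sr_withinL1 (L2 := L2) hn r]
          exact hr1 (N1 (v ⟨0, hn⟩)) n hn r (fun k => ⟨v k, hcl k⟩)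
        · push_neg at hcl
          obtain ⟨k0, hk0⟩ := hcl
          constructor
          · intro h
            exfalso
            rw [sr_relMap_L1] at h
            obtain ⟨j, w, hw, -⟩ := h
            apply hk0
            have e1 := congrArg (fun x : Σₗ i, M i => (ofLex x).1) (hw k0)
            have e2 := congrArg (fun x : Σₗ i, M i => (ofLex x).1) (hw ⟨0, hn⟩)
            exact e1.trans e2.symm
          · intro h
            exfalso
            rw [sr_relMap_L1] at h
            obtain ⟨j, w, hw, -⟩ := h
            apply hk0
            have e1 := congrArg (fun x : Σₗ i, M i => (ofLex x).1) (hw k0)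
            have e2 := congrArg (fun x : Σₗ i, M i => (ofLex x).1) (hw ⟨0, hn⟩)
            exact (hN1E _ _).mpr (e1.trans e2.symm)
    · cases r
      rw [sr_relMap_leSD, sr_relMap_leSD]
      exact hH1le (v 0) (v 1)
    · cases r
      rw [sr_relMap_E, sr_relMap_E]
      exact hN1E (v 0) (v 1)
    · rw [sr_relMap_L2, sr_relMap_L2]
      exact hN1L2 n r v
  have hH2rel : ∀ (n : ℕ) (r : (langSD L1 L2).Relations n) (v : Fin n → B2),
      (RelMap r (fun k => H2 (v k)) ↔ RelMap r (fun k => b2 (v k))) := by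
    intro n r v
    rcases r with ((r | r) | r) | r
    · rcases Nat.eq_zero_or_pos n with hn | hn
      · subst hn
        rw [show (fun k : Fin 0 => H2 (v k)) = (fun k => b2 (v k)) from
          funext fun k => k.elim0]
      · by_cases hcl : ∀ k, N2 (v k) = N2 (v ⟨0, hn⟩)
        · rw [show (fun k => H2 (v k)) =
            (fun k => (toLex ⟨N2 (v ⟨0, hn⟩), w2 _ ⟨v k, hcl k⟩⟩ : Σₗ i, M i)) from
            funext fun k => hH2cast _ _ (hcl k),
            sr_withinL1 (L2 := L2) hn r]
          exact hr2 (N2 (v ⟨0, hn⟩)) n hn r (fun k => ⟨v k, hcl k⟩)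
        · push_neg at hcl
          obtain ⟨k0, hk0⟩ := hcl
          constructor
          · intro h
            exfalso
            rw [sr_relMap_L1] at h
            obtain ⟨j, w, hw, -⟩ := h
            apply hk0
            have e1 := congrArg (fun x : Σₗ i, M i => (ofLex x).1) (hw k0)
            have e2 := congrArg (fun x : Σₗ i, M i => (ofLex x).1) (hw ⟨0, hn⟩)
            exact e1.trans e2.symm
          · intro h
            exfalso
            rw [sr_relMap_L1] at h
            obtain ⟨j, w, hw, -⟩ := h
            apply hk0
            have e1 := congrArg (fun x : Σₗ i, M i => (ofLex x).1) (hw k0)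
            have e2 := congrArg (fun x : Σₗ i, M i => (ofLex x).1) (hw ⟨0, hn⟩)
            exact (hN2E _ _).mpr (e1.trans e2.symm)
    · cases r
      rw [sr_relMap_leSD, sr_relMap_leSD]
      exact hH2le (v 0) (v 1)
    · cases r
      rw [sr_relMap_E, sr_relMap_E]
      exact hN2E (v 0) (v 1)
    · rw [sr_relMap_L2, sr_relMap_L2]
      exact hN2L2 n r v
  have hHcomm : ∀ a : A, H1 (f1 a) = H2 (f2 a) := by
    intro a
    rw [hH1cast (f1 a) (N1 (f1 a)) rfl, hH2cast (f2 a) (N1 (f1 a)) (hNcomm a).symm]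
    exact congrArg (fun m => (toLex ⟨N1 (f1 a), m⟩ : Σₗ i, M i))
      (hcc (N1 (f1 a)) a rfl (hNcomm a).symm)
  exact sr_glue hB1fg hB2fg f1 f2
    ⟨⟨H1, hH1inj⟩, fun {n} f => isEmptyElim f, @fun n r v =>
      (hH1rel n r v).trans (b1.map_rel r v)⟩
    ⟨⟨H2, hH2inj⟩, fun {n} f => isEmptyElim f, @fun n r v =>
      (hH2rel n r v).trans (b2.map_rel r v)⟩
    hHcomm

end AuxAP

end SRPaper

open SRPaper in
/-- If the age of the index structure `𝓘` and the common age `K` of the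
fibers `M_i` have HP, JEP, and AP, then so does the age of the semi-direct product
structure `𝓘_{i ∈ I}(M_i)`. -/
theorem statement11 (I : Type) [LinearOrder I] [Countable I]
    (L2 : Language) [L2.IsRelational] [L2.Structure I]
    (L1 : Language) [L1.IsRelational] (M : I → Type)
    [∀ i, L1.Structure (M i)] [∀ i, LinearOrder (M i)] [∀ i, Countable (M i)]
    (K : Set (CategoryTheory.Bundled (L1.sum Language.order).Structure))
    (hK : ∀ i, (L1.sum Language.order).age (M i) = K)
    (hIHP : Hereditary ((L2.sum Language.order).age I))
    (hIJEP : JointEmbedding ((L2.sum Language.order).age I))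
    (hIAP : Amalgamation ((L2.sum Language.order).age I))
    (hKHP : Hereditary K) (hKJEP : JointEmbedding K) (hKAP : Amalgamation K) :
    Hereditary ((langSD L1 L2).age (Σₗ i, M i)) ∧
      JointEmbedding ((langSD L1 L2).age (Σₗ i, M i)) ∧
      Amalgamation ((langSD L1 L2).age (Σₗ i, M i)) :=
  ⟨age.hereditary _, age.jointEmbedding _, SRPaper.sr_AP hK hIAP hKAP⟩
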